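/- Let γ > 0, v ∈ ℝ^{d×r}, X ∈ St(d,r), h : ℝ^{d×r} → ℝ convex, and let ζ* ∈ T_X be a minimizer of φ over T_X. Then for every η ∈ (0,1], φ(ηζ*) − φ(0) ≤ ((η−2)η/(2γ))‖ζ*‖². -/

import Mathlib

open Matrix MeasureTheory Finset

noncomputable section

/-- The space of real `d × r` matrices. -/
abbrev Mat (d r : ℕ) := Matrix (Fin d) (Fin r) ℝ

/-- The Frobenius inner product `⟨A, B⟩ = tr(Aᵀ B)`. -/
def finner {d r : ℕ} (A B : Mat d r) : ℝ := (Aᵀ * B).trace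

/-- The Stiefel manifold `St(d,r) = {X : Xᵀ X = I}`. -/
def Stiefel {d r : ℕ} (X : Mat d r) : Prop := Xᵀ * X = 1

/-- The tangent space to the Stiefel manifold at `X`:
`T_X = {ζ : ζᵀ X + Xᵀ ζ = 0}`. -/
def TangentAt {d r : ℕ} (X : Mat d r) : Set (Mat d r) :=
  {ζ | ζᵀ * X + Xᵀ * ζ = 0}

lemma posSemidef_one_add_transpose_mul_self {d r : ℕ} (ξ : Mat d r) :
    (1 + ξᵀ * ξ).PosSemidef := by
  have h := Matrix.posSemidef_conjTranspose_mul_self ξ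
  rw [Matrix.conjTranspose_eq_transpose_of_trivial] at h
  exact Matrix.PosSemidef.one.add h

/-- The positive semidefinite square root of a positive semidefinite matrix
(removed from Mathlib; restored with its former definition). -/
def Matrix.PosSemidef.sqrt {n 𝕜 : Type*} [Fintype n] [RCLike 𝕜] [PartialOrder 𝕜] [DecidableEq n]
    {A : Matrix n n 𝕜} (hA : A.PosSemidef) : Matrix n n 𝕜 :=
  hA.1.eigenvectorUnitary.1 * diagonal ((↑) ∘ (√·) ∘ hA.1.eigenvalues) *
  (star hA.1.eigenvectorUnitary : Matrix n n 𝕜)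

/-- The polar retraction `Retr_X(ξ) = (X + ξ)(I + ξᵀ ξ)^{-1/2}`, where the square root
is the unique positive-semidefinite (here positive-definite) square root. -/
def polarRetr {d r : ℕ} (X ξ : Mat d r) : Mat d r :=
  (X + ξ) * ((posSemidef_one_add_transpose_mul_self ξ).sqrt)⁻¹

/- Equip matrices with the Frobenius norm (the norm induced by `finner`). -/
attribute [local instance] Matrix.frobeniusNormedAddCommGroup Matrix.frobeniusNormedSpace

/-- The subproblem objective `φ(ζ) = ⟨v, ζ⟩ + (1/(2γ))‖ζ‖² + h(X + ζ)`. -/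
def phi {d r : ℕ} (γ : ℝ) (h : Mat d r → ℝ) (X v ζ : Mat d r) : ℝ :=
  finner v ζ + (1 / (2 * γ)) * ‖ζ‖ ^ 2 + h (X + ζ)

/-- `ζ` is a minimizer of `phi γ h X v` over the tangent space at `X`. -/
def IsSubMin {d r : ℕ} (γ : ℝ) (h : Mat d r → ℝ) (X v ζ : Mat d r) : Prop :=
  ζ ∈ TangentAt X ∧ ∀ ζ' ∈ TangentAt X, phi γ h X v ζ ≤ phi γ h X v ζ'

lemma zero_mem_TangentAt {d r : ℕ} (X : Mat d r) : (0 : Mat d r) ∈ TangentAt X := by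
  simp [TangentAt]

lemma smul_mem_TangentAt {d r : ℕ} (X ζ : Mat d r) (c : ℝ) (hζ : ζ ∈ TangentAt X) :
    c • ζ ∈ TangentAt X := by
  simp only [TangentAt, Set.mem_setOf_eq] at hζ ⊢
  rw [Matrix.transpose_smul, Matrix.smul_mul, Matrix.mul_smul, ← smul_add, hζ, smul_zero]

lemma finner_smul {d r : ℕ} (v ζ : Mat d r) (c : ℝ) : finner v (c • ζ) = c * finner v ζ := by
  simp [finner, Matrix.mul_smul, Matrix.trace_smul]

attribute [local instance] Matrix.frobeniusNormedAddCommGroup Matrix.frobeniusNormedSpace in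
lemma phi_convex_combo {d r : ℕ} (γ : ℝ) (h : Mat d r → ℝ) (hconv : ConvexOn ℝ Set.univ h)
    (X v ζ : Mat d r) (η : ℝ) (h0 : 0 ≤ η) (h1 : η ≤ 1) :
    phi γ h X v (η • ζ) ≤ η * phi γ h X v ζ + (1 - η) * phi γ h X v 0
      + (η ^ 2 - η) * ((1 / (2 * γ)) * ‖ζ‖ ^ 2) := by
  have hcomb : X + η • ζ = η • (X + ζ) + (1 - η) • X := by
    module
  have hh : h (X + η • ζ) ≤ η * h (X + ζ) + (1 - η) * h X := by
    rw [hcomb]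
    exact hconv.2 (Set.mem_univ _) (Set.mem_univ _) h0 (by linarith) (by ring)
  have hnorm : ‖η • ζ‖ ^ 2 = η ^ 2 * ‖ζ‖ ^ 2 := by
    rw [norm_smul, mul_pow, Real.norm_eq_abs, sq_abs]
  simp only [phi, finner_smul, hnorm, add_zero, norm_zero]
  have : finner v 0 = 0 := by simp [finner]
  rw [this]
  nlinarith [hh]

/-- if `ζ*` minimizes `φ` over `T_X`, then for every `η ∈ (0,1]`,
`φ(ηζ*) − φ(0) ≤ ((η−2)η/(2γ))‖ζ*‖²`. -/
theorem subproblem_minimizer_scaled_descent {d r : ℕ} (γ : ℝ) (hγ : 0 < γ)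
    (v X : Mat d r) (hX : Stiefel X)
    (h : Mat d r → ℝ) (hconv : ConvexOn ℝ Set.univ h)
    (ζs : Mat d r) (hmin : IsSubMin γ h X v ζs) :
    ∀ η : ℝ, 0 < η → η ≤ 1 →
      phi γ h X v (η • ζs) - phi γ h X v 0 ≤ ((η - 2) * η / (2 * γ)) * ‖ζs‖ ^ 2 := by
  intro η hη0 hη1
  obtain ⟨hζT, hmin⟩ := hmin
  have hns : (0 : ℝ) ≤ ‖ζs‖ ^ 2 := by positivity
  -- Step 1: φ(ζs) - φ(0) ≤ -(1/(2γ))‖ζs‖²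
  have key : phi γ h X v ζs - phi γ h X v 0 ≤ -((1 / (2 * γ)) * ‖ζs‖ ^ 2) := by
    have hstep : ∀ t : ℝ, 0 ≤ t → t < 1 →
        phi γ h X v ζs - phi γ h X v 0 ≤ -(t * ((1 / (2 * γ)) * ‖ζs‖ ^ 2)) := by
      intro t ht0 ht1
      have hmem := smul_mem_TangentAt X ζs t hζT
      have h1 := hmin _ hmem
      have h2 := phi_convex_combo γ h hconv X v ζs t ht0 ht1.le
      nlinarith [h1, h2]
    by_contra hc
    push_neg at hc
    rcases eq_or_lt_of_le hns with hz | hz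
    · have := hstep 0 le_rfl one_pos
      simp only [zero_mul, neg_zero] at this
      rw [← hz] at hc
      simp at hc
      linarith
    · set a := phi γ h X v ζs - phi γ h X v 0
      set c := (1 / (2 * γ)) * ‖ζs‖ ^ 2 with hc_def
      have hcpos : 0 < c := by positivity
      -- a > -c, but a ≤ -t c for all t < 1; pick t between a/(-c) and 1
      have hlt : -a / c < 1 := by
        rw [div_lt_one hcpos]; linarith
      set t := max 0 (-a / c)
      have ht0 : 0 ≤ t := le_max_left _ _
      have ht1 : t < 1 := max_lt one_pos hlt
      have := hstep t ht0 ht1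
      have h3 : -a / c ≤ t := le_max_right _ _
      have h4 : -a ≤ t * c := by
        rw [div_le_iff₀ hcpos] at h3; linarith
      -- a ≤ -(t*c) and -a ≤ t*c gives a = -(t*c), then t*c < c needs... 
      -- Use t' = (t+1)/2 instead.
      have ht'0 : 0 ≤ (t + 1) / 2 := by linarith
      have ht'1 : (t + 1) / 2 < 1 := by linarith
      have h5 := hstep ((t + 1) / 2) ht'0 ht'1
      clear_value a c t
      nlinarith [mul_pos (by linarith : (0:ℝ) < 1 - t) hcpos]
  -- Step 2: combine
  have h2 := phi_convex_combo γ h hconv X v ζs η hη0.le hη1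
  have hγ' : (0:ℝ) < 2 * γ := by linarith
  have : ((η - 2) * η / (2 * γ)) * ‖ζs‖ ^ 2 = (η ^ 2 - η) * ((1 / (2 * γ)) * ‖ζs‖ ^ 2)
      + η * (-((1 / (2 * γ)) * ‖ζs‖ ^ 2)) := by
    field_simp; ring
  rw [this]
  nlinarith [h2, key]
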